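/- Let s : (l, r) → ℝ be given by s(x) = ∫_c^x exp(∫_c^y β(z) dz) dy where β² is locally integrable on (l,r). Then the inverse function q = s⁻¹ defined on s((l,r)) is continuously differentiable with q'(u) = 1/s'(q(u)) > 0, q' is locally absolutely continuous, and Lebesgue-almost everywhere q''(u) = -β(q(u))·(q'(u))². -/

import Mathlib

/-!
Write `F x = ∫_c^x β`. Since `β ∈ L¹_loc`, the scale function `s` has the continuous positive
derivative `exp ∘ F`, so it is a C¹ diffeomorphism of `(l, r)` onto an open interval and
`q' = exp (-F ∘ q)`. The function `exp ∘ (-F)` is absolutely continuous with a.e. derivative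
`-β exp (-F)`, and this is exactly what `q'' = -β(q) q'²` becomes under the monotone change of
variables `u = s x`; so the fundamental theorem of calculus for `q'` is the one for `exp ∘ (-F)`.
-/

open MeasureTheory Set Filter Topology

theorem LipschitzOnWith.comp_absolutelyContinuousOnInterval {X Y : Type*} [PseudoMetricSpace X]
    [PseudoMetricSpace Y] {f : ℝ → X} {g : X → Y} {K : NNReal} {t : Set X} {a b : ℝ}
    (hg : LipschitzOnWith K g t) (hf : AbsolutelyContinuousOnInterval f a b)
    (hft : MapsTo f (uIcc a b) t) : AbsolutelyContinuousOnInterval (g ∘ f) a b := by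
  rw [absolutelyContinuousOnInterval_iff] at hf ⊢
  intro ε hε
  obtain ⟨δ, hδ, hfδ⟩ := hf (ε / (K + 1)) (by positivity)
  refine ⟨δ, hδ, fun E hE hEδ => ?_⟩
  calc ∑ i ∈ Finset.range E.1, dist (g (f (E.2 i).1)) (g (f (E.2 i).2))
      ≤ ∑ i ∈ Finset.range E.1, K * dist (f (E.2 i).1) (f (E.2 i).2) := by
        gcongr with i hi
        exact hg.dist_le_mul _ (hft (hE.1 i hi).1) _ (hft (hE.1 i hi).2)
    _ = K * ∑ i ∈ Finset.range E.1, dist (f (E.2 i).1) (f (E.2 i).2) := by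
        rw [Finset.mul_sum]
    _ ≤ K * (ε / (K + 1)) := by gcongr; exact (hfδ E hE hEδ).le
    _ < ε := by
        rw [mul_div_assoc', div_lt_iff₀ (by positivity)]
        nlinarith

theorem ContDiff.comp_absolutelyContinuousOnInterval {g f : ℝ → ℝ} {a b : ℝ}
    (hg : ContDiff ℝ 1 g) (hf : AbsolutelyContinuousOnInterval f a b) :
    AbsolutelyContinuousOnInterval (g ∘ f) a b := by
  obtain ⟨C, hC⟩ := hf.exists_bound
  obtain ⟨K, hK⟩ := hg.contDiffOn.exists_lipschitzOnWith one_ne_zero (convex_Icc (-C) C)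
    isCompact_Icc
  exact hK.comp_absolutelyContinuousOnInterval hf fun x hx => abs_le.mp (hC x hx)

theorem integral_mul_exp_neg_integral {β : ℝ → ℝ} {a b : ℝ}
    (hβ : IntervalIntegrable β volume a b) :
    ∫ x in a..b, β x * Real.exp (-∫ t in a..x, β t) = 1 - Real.exp (-∫ t in a..b, β t) := by
  set E : ℝ → ℝ := fun x => Real.exp (-∫ t in a..x, β t)
  have hE : AbsolutelyContinuousOnInterval E a b :=
    (Real.contDiff_exp.comp contDiff_neg).comp_absolutelyContinuousOnInterval
      (hβ.absolutelyContinuousOnInterval_intervalIntegral left_mem_uIcc)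
  have hE' : ∀ᵐ x, x ∈ uIoc a b → deriv E x = -(β x * E x) := by
    filter_upwards [hβ.ae_hasDerivAt_integral] with x hx hxab
    have := (hx (uIoc_subset_uIcc hxab) a left_mem_uIcc).fun_neg.exp
    rw [this.deriv, mul_neg, mul_comm]
  have := hE.integral_deriv_eq_sub
  rw [intervalIntegral.integral_congr_ae hE', intervalIntegral.integral_neg] at this
  simp only [E, intervalIntegral.integral_same, neg_zero, Real.exp_zero] at this
  linarith

theorem integral_mul_exp_neg_integral_eq_sub {β : ℝ → ℝ} {a b c : ℝ}
    (ha : IntervalIntegrable β volume c a) (hb : IntervalIntegrable β volume c b) :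
    ∫ x in a..b, β x * Real.exp (-∫ t in c..x, β t)
      = Real.exp (-∫ t in c..a, β t) - Real.exp (-∫ t in c..b, β t) := by
  have hint {x : ℝ} (hx : IntervalIntegrable β volume c x) :
      IntervalIntegrable (fun y => β y * Real.exp (-∫ t in c..y, β t)) volume c x :=
    hx.mul_continuousOn
      (intervalIntegral.continuousOn_primitive_interval' hx left_mem_uIcc).neg.rexp
  rw [← intervalIntegral.integral_interval_sub_left (hint hb) (hint ha),
    integral_mul_exp_neg_integral hb, integral_mul_exp_neg_integral ha]
  ring

theorem intervalIntegrable_and_integral_eq_of_deriv_nonneg {f f' g : ℝ → ℝ} {a b : ℝ}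
    (hab : a ≤ b) (hf : ∀ x ∈ Icc a b, HasDerivAt f (f' x) x) (hf' : ∀ x ∈ Icc a b, 0 ≤ f' x)
    (hg : IntegrableOn (fun x => f' x * g (f x)) (Icc a b)) :
    IntervalIntegrable g volume (f a) (f b) ∧
      ∫ u in f a..f b, g u = ∫ x in a..b, f' x * g (f x) := by
  have hfc : ContinuousOn f (Icc a b) := fun x hx => (hf x hx).continuousAt.continuousWithinAt
  have hfo : ∀ x ∈ Ioo a b, HasDerivAt f (f' x) x := fun x hx => hf x (Ioo_subset_Icc_self hx)
  have hfo' : ∀ x ∈ Ioo a b, 0 ≤ f' x := fun x hx => hf' x (Ioo_subset_Icc_self hx)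
  have hfab : f a ≤ f b := by
    refine monotoneOn_of_hasDerivWithinAt_nonneg (f' := f') (convex_Icc a b) hfc (fun x hx => ?_)
      (fun x hx => ?_) ⟨le_rfl, hab⟩ ⟨hab, le_rfl⟩ hab <;> rw [interior_Icc] at hx
    exacts [(hfo x hx).hasDerivWithinAt.mono interior_subset, hfo' x hx]
  constructor
  · rwa [intervalIntegrable_iff_integrableOn_Icc_of_le hfab,
      ← integrableOn_Icc_deriv_smul_iff_of_deriv_nonneg hfc hfo hfo' hab]
  · rw [intervalIntegral.integral_of_le hfab, intervalIntegral.integral_of_le hab,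
      ← integral_Icc_eq_integral_Ioc, ← integral_Icc_eq_integral_Ioc,
      ← integral_Icc_deriv_smul_of_deriv_nonneg hfc hfo hfo' hab]
    rfl

theorem MeasureTheory.LocallyIntegrableOn.of_sq {X : Type*} [TopologicalSpace X]
    [MeasurableSpace X] {μ : Measure X} [IsLocallyFiniteMeasure μ] {f : X → ℝ} {s : Set X}
    (h : LocallyIntegrableOn (fun x => f x ^ 2) s μ) (hf : AEStronglyMeasurable f μ) :
    LocallyIntegrableOn f s μ :=
  (h.add (locallyIntegrableOn_const 1)).mono hf <| ae_of_all _ fun x => by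
    change |f x| ≤ |f x ^ 2 + 1|
    rw [abs_of_nonneg (by positivity : (0 : ℝ) ≤ f x ^ 2 + 1)]
    nlinarith [sq_abs (f x), sq_nonneg (|f x| - 1)]

section OpenInterval

variable {l r c : ℝ} {f : ℝ → ℝ}

theorem MeasureTheory.LocallyIntegrableOn.intervalIntegrable_of_mem_Ioo
    (hf : LocallyIntegrableOn f (Ioo l r)) {a b : ℝ} (ha : a ∈ Ioo l r) (hb : b ∈ Ioo l r) :
    IntervalIntegrable f volume a b :=
  (hf.integrableOn_compact_subset (ordConnected_Ioo.uIcc_subset ha hb)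
    isCompact_uIcc).intervalIntegrable

theorem MeasureTheory.LocallyIntegrableOn.continuousOn_primitive_Ioo
    (hf : LocallyIntegrableOn f (Ioo l r)) (hc : c ∈ Ioo l r) :
    ContinuousOn (fun x => ∫ t in c..x, f t) (Ioo l r) := by
  intro x hx
  obtain ⟨a, ha, hac⟩ := exists_between (lt_min hc.1 hx.1)
  obtain ⟨b, hcb, hb⟩ := exists_between (max_lt hc.2 hx.2)
  rw [lt_min_iff] at hac
  rw [max_lt_iff] at hcb
  have hab : a ≤ b := by linarith [hac.1, hcb.1]
  have hcont := intervalIntegral.continuousOn_primitive_interval'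
    (hf.intervalIntegrable_of_mem_Ioo ⟨ha, by linarith⟩ ⟨by linarith, hb⟩)
    (uIcc_of_le hab ▸ ⟨hac.1.le, hcb.1.le⟩ : c ∈ uIcc a b)
  rw [uIcc_of_le hab] at hcont
  exact (hcont.continuousAt (Icc_mem_nhds hac.2 hcb.2)).continuousWithinAt

theorem ContinuousOn.hasDerivAt_primitive_Ioo (hf : ContinuousOn f (Ioo l r))
    (hc : c ∈ Ioo l r) {x : ℝ} (hx : x ∈ Ioo l r) :
    HasDerivAt (fun y => ∫ t in c..y, f t) (f x) x :=
  intervalIntegral.integral_hasDerivAt_right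
    (hf.mono (ordConnected_Ioo.uIcc_subset hc hx)).intervalIntegrable
    (hf.stronglyMeasurableAtFilter isOpen_Ioo x hx) (hf.continuousAt (Ioo_mem_nhds hx.1 hx.2))

end OpenInterval

section LeftInverse

variable {I : Set ℝ} {s g q : ℝ → ℝ}

theorem Convex.strictMonoOn_of_hasDerivAt_pos (hI : Convex ℝ I)
    (hs : ∀ x ∈ I, HasDerivAt s (g x) x) (hg0 : ∀ x ∈ I, 0 < g x) : StrictMonoOn s I :=
  strictMonoOn_of_hasDerivWithinAt_pos hI (fun x hx => (hs x hx).continuousAt.continuousWithinAt)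
    (fun x hx => (hs x (interior_subset hx)).hasDerivWithinAt)
    (fun x hx => hg0 x (interior_subset hx))

theorem IsOpen.image_of_hasDerivAt (hI : IsOpen I) (hs : ∀ x ∈ I, HasDerivAt s (g x) x)
    (hg : ContinuousOn g I) (hg0 : ∀ x ∈ I, g x ≠ 0) : IsOpen (s '' I) := by
  rw [isOpen_iff_mem_nhds]
  rintro _ ⟨x, hx, rfl⟩
  have hstrict : HasStrictDerivAt s (g x) x :=
    hasStrictDerivAt_of_hasDerivAt_of_continuousAt (eventually_of_mem (hI.mem_nhds hx) hs)
      (hg.continuousAt (hI.mem_nhds hx))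
  rw [← hstrict.map_nhds_eq (hg0 x hx)]
  exact image_mem_map (hI.mem_nhds hx)

theorem Set.LeftInvOn.continuousAt_of_strictMonoOn (hq : LeftInvOn q s I)
    (hs : StrictMonoOn s I) (hI : IsOpen I) (hsI : IsOpen (s '' I)) {u : ℝ} (hu : u ∈ s '' I) :
    ContinuousAt q u := by
  obtain ⟨x, hx, rfl⟩ := hu
  have hmono : MonotoneOn q (s '' I) := by
    rintro _ ⟨y, hy, rfl⟩ _ ⟨z, hz, rfl⟩ hyz
    rw [hq hy, hq hz]
    exact (hs.le_iff_le hy hz).mp hyz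
  refine continuousAt_of_monotoneOn_of_image_mem_nhds hmono (hsI.mem_nhds ⟨x, hx, rfl⟩) ?_
  rw [hq.image_image, hq hx]
  exact hI.mem_nhds hx

theorem Set.LeftInvOn.hasDerivAt_of_deriv_pos {l r : ℝ} (hq : LeftInvOn q s (Ioo l r))
    (hs : ∀ x ∈ Ioo l r, HasDerivAt s (g x) x) (hg : ContinuousOn g (Ioo l r))
    (hg0 : ∀ x ∈ Ioo l r, 0 < g x) {u : ℝ} (hu : u ∈ s '' Ioo l r) :
    HasDerivAt q (g (q u))⁻¹ u := by
  have hsI : IsOpen (s '' Ioo l r) :=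
    isOpen_Ioo.image_of_hasDerivAt hs hg fun x hx => (hg0 x hx).ne'
  have hsm : StrictMonoOn s (Ioo l r) := (convex_Ioo l r).strictMonoOn_of_hasDerivAt_pos hs hg0
  have hqu : q u ∈ Ioo l r := by
    obtain ⟨x, hx, rfl⟩ := hu
    rwa [hq hx]
  exact (hs (q u) hqu).of_local_left_inverse
    (hq.continuousAt_of_strictMonoOn hsm isOpen_Ioo hsI hu) (hg0 _ hqu).ne'
    (eventually_of_mem (hsI.mem_nhds hu) hq.rightInvOn_image)

end LeftInverse

theorem intervalIntegrable_and_sub_eq_integral_of_comp {l r c : ℝ} {β s φ ψ : ℝ → ℝ}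
    (hβ : LocallyIntegrableOn β (Ioo l r)) (hc : c ∈ Ioo l r)
    (hs : ∀ x ∈ Ioo l r, HasDerivAt s (Real.exp (∫ t in c..x, β t)) x)
    (hψ : ∀ x ∈ Ioo l r, ψ (s x) = Real.exp (-∫ t in c..x, β t))
    (hφ : ∀ x ∈ Ioo l r, φ (s x) = -β x * ψ (s x) ^ 2)
    {a b : ℝ} (ha : a ∈ Ioo l r) (hb : b ∈ Ioo l r) (hab : s a ≤ s b) :
    IntervalIntegrable φ volume (s a) (s b) ∧ ψ (s b) - ψ (s a) = ∫ u in s a..s b, φ u := by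
  replace hab : a ≤ b :=
    ((convex_Ioo l r).strictMonoOn_of_hasDerivAt_pos hs fun _ _ => Real.exp_pos _).le_iff_le
      ha hb |>.mp hab
  have hIcc : Icc a b ⊆ Ioo l r := ordConnected_Ioo.out ha hb
  have hpull : ∀ x ∈ Icc a b, Real.exp (∫ t in c..x, β t) * φ (s x)
      = -(β x * Real.exp (-∫ t in c..x, β t)) := fun x hx => by
    rw [hφ x (hIcc hx), hψ x (hIcc hx), Real.exp_neg]
    field_simp
  have hint : IntegrableOn (fun x => -(β x * Real.exp (-∫ t in c..x, β t))) (Icc a b) := by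
    rw [← intervalIntegrable_iff_integrableOn_Icc_of_le hab]
    exact ((hβ.intervalIntegrable_of_mem_Ioo ha hb).mul_continuousOn
      ((hβ.continuousOn_primitive_Ioo hc).mono (uIcc_of_le hab ▸ hIcc)).neg.rexp).neg
  obtain ⟨hφint, heq⟩ := intervalIntegrable_and_integral_eq_of_deriv_nonneg hab
    (fun x hx => hs x (hIcc hx)) (fun x _ => (Real.exp_pos _).le)
    (hint.congr_fun (fun x hx => (hpull x hx).symm) measurableSet_Icc)
  refine ⟨hφint, ?_⟩
  rw [heq, intervalIntegral.integral_congr fun x hx => hpull x (uIcc_of_le hab ▸ hx),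
    intervalIntegral.integral_neg, integral_mul_exp_neg_integral_eq_sub
      (hβ.intervalIntegrable_of_mem_Ioo hc ha) (hβ.intervalIntegrable_of_mem_Ioo hc hb), neg_sub,
    hψ a ha, hψ b hb]

theorem stmt2_general (l r c : ℝ) (hc : c ∈ Ioo l r)
    (β : ℝ → ℝ) (hβ : Measurable β)
    (hloc : LocallyIntegrableOn (fun x => (β x) ^ 2) (Ioo l r) volume)
    (s : ℝ → ℝ)
    (hs : ∀ x ∈ Ioo l r, s x = ∫ y in c..x, Real.exp (∫ z in c..y, β z))
    (q : ℝ → ℝ)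
    (hq : ∀ x ∈ Ioo l r, q (s x) = x) :
    ∃ q' : ℝ → ℝ,
      ContinuousOn q' (s '' Ioo l r) ∧
      (∀ u ∈ s '' Ioo l r,
        HasDerivAt q (q' u) u ∧ 0 < q' u ∧
          q' u = 1 / Real.exp (∫ z in c..(q u), β z)) ∧
      ∃ q'' : ℝ → ℝ, Measurable q'' ∧
        (∀ u v : ℝ, u ∈ s '' Ioo l r → v ∈ s '' Ioo l r → u ≤ v →
          (IntervalIntegrable q'' volume u v ∧ q' v - q' u = ∫ w in u..v, q'' w)) ∧
        (∀ᵐ u ∂(volume.restrict (s '' Ioo l r)),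
          q'' u = - β (q u) * (q' u) ^ 2) := by
  set F : ℝ → ℝ := fun x => ∫ z in c..x, β z
  set U := s '' Ioo l r
  have hβI : LocallyIntegrableOn β (Ioo l r) := hloc.of_sq hβ.aestronglyMeasurable
  have hF : ContinuousOn F (Ioo l r) := hβI.continuousOn_primitive_Ioo hc
  have hsd : ∀ x ∈ Ioo l r, HasDerivAt s (Real.exp (F x)) x := fun x hx =>
    (hF.rexp.hasDerivAt_primitive_Ioo hc hx).congr_of_eventuallyEq
      (eventuallyEq_of_mem (Ioo_mem_nhds hx.1 hx.2) hs)
  have hU : IsOpen U := isOpen_Ioo.image_of_hasDerivAt hsd hF.rexp fun _ _ => Real.exp_ne_zero _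
  have hqd : ∀ u ∈ U, HasDerivAt q (Real.exp (F (q u)))⁻¹ u := fun u hu =>
    LeftInvOn.hasDerivAt_of_deriv_pos hq hsd hF.rexp (fun _ _ => Real.exp_pos _) hu
  have hq' : EqOn (deriv q) (fun u => Real.exp (-F (q u))) U := fun u hu =>
    (hqd u hu).deriv.trans (Real.exp_neg _).symm
  have hqc : ContinuousOn q U := fun u hu => (hqd u hu).continuousAt.continuousWithinAt
  classical
  -- `q` is arbitrary off `U`, so `q''` is built from an extension of `q|U` that is measurable.
  set Q := U.piecewise q fun _ => 0
  have hQ : ∀ x ∈ Ioo l r, Q (s x) = x := fun x hx =>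
    (piecewise_eq_of_mem _ _ _ (mem_image_of_mem s hx)).trans (hq x hx)
  refine ⟨deriv q, (hF.comp hqc (LeftInvOn.mapsTo hq (surjOn_image s _))).neg.rexp.congr hq',
    fun u hu => ⟨(hqd u hu).deriv ▸ hqd u hu, hq' hu ▸ Real.exp_pos _, by
      rw [(hqd u hu).deriv, one_div]⟩,
    fun w => -β (Q w) * deriv q w ^ 2,
    (hβ.comp (hqc.measurable_piecewise continuousOn_const hU.measurableSet)).neg.mul
      ((measurable_deriv q).pow_const 2), ?_, ?_⟩
  · rintro _ _ ⟨a, ha, rfl⟩ ⟨b, hb, rfl⟩ huv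
    exact intervalIntegrable_and_sub_eq_integral_of_comp hβI hc hsd
      (fun x hx => by simp only [hq' (mem_image_of_mem s hx), hq x hx, F])
      (fun x hx => by rw [hQ x hx]) ha hb huv
  · filter_upwards [ae_restrict_mem hU.measurableSet] with u hu
    simp only [Q, piecewise_eq_of_mem _ _ _ hu]

/-- For `s(x) = ∫_c^x exp(∫_c^y β(z) dz) dy` with `β²` locally integrable on
`(l,r)`, the inverse `q = s⁻¹` on `s((l,r))` is continuously differentiable with
`q'(u) = 1/s'(q(u)) > 0`, `q'` is locally absolutely continuous (encoded via the fundamental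
theorem of calculus with an integrable a.e. derivative `q''`), and Lebesgue-a.e. on the image
`q''(u) = -β(q(u))·(q'(u))²`. -/
theorem stmt2 (l r c : ℝ) (hlr : l < r) (hc : c ∈ Ioo l r)
    (β : ℝ → ℝ) (hβ : Measurable β)
    (hloc : LocallyIntegrableOn (fun x => (β x) ^ 2) (Ioo l r) volume)
    (s : ℝ → ℝ)
    (hs : ∀ x ∈ Ioo l r, s x = ∫ y in c..x, Real.exp (∫ z in c..y, β z))
    (q : ℝ → ℝ)
    (hq : ∀ x ∈ Ioo l r, q (s x) = x) :
    ∃ q' : ℝ → ℝ,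
      ContinuousOn q' (s '' Ioo l r) ∧
      (∀ u ∈ s '' Ioo l r,
        HasDerivAt q (q' u) u ∧ 0 < q' u ∧
          q' u = 1 / Real.exp (∫ z in c..(q u), β z)) ∧
      ∃ q'' : ℝ → ℝ, Measurable q'' ∧
        (∀ u v : ℝ, u ∈ s '' Ioo l r → v ∈ s '' Ioo l r → u ≤ v →
          (IntervalIntegrable q'' volume u v ∧ q' v - q' u = ∫ w in u..v, q'' w)) ∧
        (∀ᵐ u ∂(volume.restrict (s '' Ioo l r)),
          q'' u = - β (q u) * (q' u) ^ 2) :=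
  stmt2_general l r c hc β hβ hloc s hs q hq
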